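/- Let k be a field of characteristic zero, g ≥ 2 an even integer, n := g/2, and λ_1, …, λ_n ∈ k with s := λ_1 + … + λ_n. Write (X² + 1)·∏_{i=1}^{n} (X⁴ − λ_i·X² + 1) = X^(2g+2) + a_g·X^(2g) + … + a_1·X² + 1. Then the first and last dihedral invariants of (a_1, …, a_g) satisfy u_1 = a_1^(g+1) + a_g^(g+1) = 2·(1−s)^(g+1) and u_g = 2·a_1·a_g = 2·(1−s)², and consequently 2^(g-1)·u_1² − u_g^(g+1) = 0. -/

import Mathlib

/-!
Both sides of the defining identity are polynomials in `X²`, and `expand 2` is injective, so it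
becomes `(X + 1) · ∏ᵢ (X² − λᵢX + 1) = X^(g+1) + a_g X^g + … + a₁X + 1`. The factors are monic
with constant term `1`, so `a₁` is the sum of their linear coefficients and `a_g` the sum of their
subleading coefficients; both sums equal `1 − s`, and everything else is a power computation.
-/

open Polynomial Finset

namespace Polynomial

variable {R ι : Type*}

theorem coeff_X_pow_add_sum_add_one [Semiring R] {N m : ℕ} (a : ℕ → R) (hmN : m < N) {j : ℕ}
    (hj : j ∈ Icc 1 m) :
    (X ^ N + ∑ i ∈ Icc 1 m, C (a i) * X ^ i + 1 : R[X]).coeff j = a j := by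
  rw [mem_Icc] at hj
  simp [finsetSum_coeff, coeff_X_pow, coeff_one, coeff_C_mul, hj, show j ≠ N by omega,
    show j ≠ 0 by omega]

theorem coeff_one_prod_of_coeff_zero_eq_one [CommSemiring R] (s : Finset ι) (f : ι → R[X])
    (h : ∀ i ∈ s, (f i).coeff 0 = 1) :
    (∏ i ∈ s, f i).coeff 1 = ∑ i ∈ s, (f i).coeff 1 := by
  classical
  induction s using Finset.induction_on with
  | empty => simp [coeff_one]
  | insert j s hj ih =>
    have hs : (∏ i ∈ s, f i).coeff 0 = 1 := by
      rw [coeff_zero_prod]; exact prod_eq_one fun i hi => h i (mem_insert_of_mem hi)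
    rw [prod_insert hj, sum_insert hj, mul_coeff_one, hs, h j (mem_insert_self j s),
      ih fun i hi => h i (mem_insert_of_mem hi), one_mul, mul_one, add_comm]

section CommRing
variable [CommRing R] (s : Finset ι) (lam : ι → R)

theorem monic_prod_X_sq_sub_C_mul_X_add_one :
    (∏ i ∈ s, (X ^ 2 - C (lam i) * X + 1) : R[X]).Monic :=
  monic_prod_of_monic _ _ fun _ _ => by monicity!

theorem coeff_one_X_add_one_mul_prod :
    ((X + 1) * ∏ i ∈ s, (X ^ 2 - C (lam i) * X + 1) : R[X]).coeff 1 = 1 - ∑ i ∈ s, lam i := by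
  rw [mul_coeff_one, coeff_zero_prod, coeff_one_prod_of_coeff_zero_eq_one _ _ fun _ _ => by simp]
  simp [coeff_one, sub_eq_add_neg, add_comm]

variable [Nontrivial R]

theorem natDegree_X_sq_sub_C_mul_X_add_one (l : R) :
    (X ^ 2 - C l * X + 1 : R[X]).natDegree = 2 := by
  compute_degree!

theorem nextCoeff_X_sq_sub_C_mul_X_add_one (l : R) :
    (X ^ 2 - C l * X + 1 : R[X]).nextCoeff = -l := by
  simp [nextCoeff, natDegree_X_sq_sub_C_mul_X_add_one, coeff_one]

theorem natDegree_prod_X_sq_sub_C_mul_X_add_one :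
    (∏ i ∈ s, (X ^ 2 - C (lam i) * X + 1) : R[X]).natDegree = 2 * #s := by
  rw [natDegree_prod_of_monic _ _ fun _ _ => by monicity!,
    sum_congr rfl fun i _ => natDegree_X_sq_sub_C_mul_X_add_one (lam i), sum_const, smul_eq_mul,
    mul_comm]

theorem nextCoeff_prod_X_sq_sub_C_mul_X_add_one :
    (∏ i ∈ s, (X ^ 2 - C (lam i) * X + 1) : R[X]).nextCoeff = -∑ i ∈ s, lam i := by
  rw [Monic.nextCoeff_prod _ _ fun _ _ => by monicity!]
  simp [nextCoeff_X_sq_sub_C_mul_X_add_one]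

theorem coeff_two_mul_card_X_add_one_mul_prod :
    ((X + 1) * ∏ i ∈ s, (X ^ 2 - C (lam i) * X + 1) : R[X]).coeff (2 * #s) =
      1 - ∑ i ∈ s, lam i := by
  have hF := monic_prod_X_sq_sub_C_mul_X_add_one s lam
  have hnext := (monic_X_add_C (1 : R)).nextCoeff_mul hF
  rw [nextCoeff, (monic_X_add_C 1).natDegree_mul hF, natDegree_X_add_C,
    natDegree_prod_X_sq_sub_C_mul_X_add_one, nextCoeff_X_add_C, nextCoeff_prod_X_sq_sub_C_mul_X_add_one] at hnext
  simpa [sub_eq_add_neg] using hnext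

end CommRing
end Polynomial

theorem two_involutions_locus_even_genus_general {k : Type*} [Field k]
    (g : ℕ) (hg : 2 ≤ g) (heven : Even g) (n : ℕ) (hn : n = g / 2)
    (lam : ℕ → k) (s : k) (hs : s = ∑ i ∈ Finset.range n, lam i)
    (a : ℕ → k)
    (ha : ((X : k[X]) ^ 2 + 1) * (∏ i ∈ Finset.range n, (X ^ 4 - C (lam i) * X ^ 2 + 1))
        = X ^ (2 * g + 2) + (∑ i ∈ Finset.Icc 1 g, C (a i) * X ^ (2 * i)) + 1)
    (u₁ ug : k)
    (hu₁ : u₁ = a 1 ^ (g + 1) + a g ^ (g + 1)) (hug : ug = 2 * a 1 * a g) :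
    u₁ = 2 * (1 - s) ^ (g + 1) ∧ ug = 2 * (1 - s) ^ 2 ∧
      2 ^ (g - 1) * u₁ ^ 2 - ug ^ (g + 1) = 0 := by
  have hgn : 2 * #(range n) = g := by obtain ⟨r, rfl⟩ := heven; rw [card_range]; omega
  have hR : (X + 1) * ∏ i ∈ range n, (X ^ 2 - C (lam i) * X + 1) =
      X ^ (g + 1) + ∑ i ∈ Icc 1 g, C (a i) * X ^ i + 1 := by
    refine expand_injective two_pos ?_
    convert ha using 1
    · simp [map_prod, ← pow_mul]
    · simp [map_sum, ← pow_mul, mul_add_one]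
  have ha₁ : a 1 = 1 - s := by
    rw [← coeff_X_pow_add_sum_add_one a (Nat.lt_succ_self g) (mem_Icc.2 ⟨le_rfl, by omega⟩), ← hR,
      coeff_one_X_add_one_mul_prod, hs]
  have hag : a g = 1 - s := by
    rw [← coeff_X_pow_add_sum_add_one a (Nat.lt_succ_self g) (mem_Icc.2 ⟨by omega, le_rfl⟩), ← hR,
      ← hgn, coeff_two_mul_card_X_add_one_mul_prod, hs]
  rw [hu₁, hug, ha₁, hag]
  refine ⟨by ring, by ring, ?_⟩
  obtain ⟨m, rfl⟩ : ∃ m, g = m + 1 := ⟨g - 1, by omega⟩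
  rw [Nat.add_sub_cancel]
  generalize 1 - s = t
  ring

/-- for `g ≥ 2` even, writing
`(X² + 1)·∏ᵢ (X⁴ − λᵢX² + 1) = X^(2g+2) + a_gX^(2g) + … + a₁X² + 1` and
`s = λ₁ + … + λₙ`, the dihedral invariants satisfy `u₁ = 2(1−s)^(g+1)`,
`u_g = 2(1−s)²`, hence `2^(g-1)u₁² − u_g^(g+1) = 0`. -/
theorem two_involutions_locus_even_genus {k : Type*} [Field k] [CharZero k]
    (g : ℕ) (hg : 2 ≤ g) (heven : Even g) (n : ℕ) (hn : n = g / 2)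
    (lam : ℕ → k) (s : k) (hs : s = ∑ i ∈ Finset.range n, lam i)
    (a : ℕ → k)
    (ha : ((X : k[X]) ^ 2 + 1) * (∏ i ∈ Finset.range n, (X ^ 4 - C (lam i) * X ^ 2 + 1))
        = X ^ (2 * g + 2) + (∑ i ∈ Finset.Icc 1 g, C (a i) * X ^ (2 * i)) + 1)
    (u₁ ug : k)
    (hu₁ : u₁ = a 1 ^ (g + 1) + a g ^ (g + 1)) (hug : ug = 2 * a 1 * a g) :
    u₁ = 2 * (1 - s) ^ (g + 1) ∧ ug = 2 * (1 - s) ^ 2 ∧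
      2 ^ (g - 1) * u₁ ^ 2 - ug ^ (g + 1) = 0 :=
  two_involutions_locus_even_genus_general g hg heven n hn lam s hs a ha u₁ ug hu₁ hug
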